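/- arXiv:1003.3085 — 9 statements merged into one kernel-verified Lean document; each statement's English description precedes it below -/
import Mathlib

section
/- Let (G,H) be an Eulerian instance with three pairs of terminals, H = (VG, {s1t1, s2t2, s3t3}). If there exist edge-disjoint paths P1 from s1 to t1 and P2 from s2 to t2 in G, then there also exists a path P3 from s3 to t3 in G that is edge-disjoint from both P1 and P2; that is, (G,H) is feasible. -/
/-!
We encode a multigraph on vertex type `V` with edge-index type `E` by a map
`G : E → V × V`: the edge with index `e` joins the (unordered) endpoints
`(G e).1` and `(G e).2`.
-/

/-- The degree of `v` in the multigraph `G`: the number of edge-ends of `G`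
incident to `v` (a loop counts twice). -/
noncomputable def mdeg {V E : Type} (G : E → V × V) (v : V) : ℕ :=
  Set.ncard {p : E × Bool | (cond p.2 (G p.1).1 (G p.1).2) = v}

/-- `mcut G U` is `d_G(U)`: the number of edges of `G` having exactly one
endpoint in `U`. -/
noncomputable def mcut {V E : Type} (G : E → V × V) (U : Set V) : ℕ :=
  Set.ncard {e : E | ((G e).1 ∈ U ∧ (G e).2 ∉ U) ∨ ((G e).2 ∈ U ∧ (G e).1 ∉ U)}

/-- Walks in the multigraph `G`; an edge may be traversed in either direction. -/
inductive MWalk {V E : Type} (G : E → V × V) : V → V → Type where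
  | nil (v : V) : MWalk G v v
  | cons {u v w : V} (e : E) (he : G e = (u, v) ∨ G e = (v, u)) (tail : MWalk G v w) :
      MWalk G u w

namespace MWalk
/-- The list of edges traversed by a walk. -/
def edges {V E : Type} {G : E → V × V} : {u v : V} → MWalk G u v → List E
  | _, _, nil _ => []
  | _, _, cons e _ p => e :: p.edges
end MWalk

/-- An instance `(G, H)` (`H` is the demand multigraph, on the same vertex set)
is feasible if the demand edges can be routed by pairwise edge-disjoint paths
of `G`: for each demand edge `i` there is a walk of `G` connecting its two
endpoints, the walks being pairwise edge-disjoint. -/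
def MFeasible {V E E' : Type} (G : E → V × V) (H : E' → V × V) : Prop :=
  ∃ P : (i : E') → MWalk G (H i).1 (H i).2,
    ∀ i j : E', i ≠ j → List.Disjoint (P i).edges (P j).edges

/-- The multigraph `G` is connected (all of its vertex set lies in one
connected component). -/
def MConnected {V E : Type} (G : E → V × V) : Prop :=
  ∀ u v : V, Nonempty (MWalk G u v)

/-- The subgraph `G[U]` induced by `U` is connected: any two vertices of `U`
are joined by a walk all of whose edges have both endpoints in `U`. -/
def MInducedConnected {V E : Type} (G : E → V × V) (U : Set V) : Prop :=
  ∀ u ∈ U, ∀ v ∈ U, ∃ p : MWalk G u v, ∀ e ∈ p.edges, (G e).1 ∈ U ∧ (G e).2 ∈ U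

/-- The instance `(G, H)` is Eulerian: every vertex of `G + H` has even degree. -/
def MEulerian {V E E' : Type} (G : E → V × V) (H : E' → V × V) : Prop :=
  ∀ v : V, Even (mdeg G v + mdeg H v)


/-!
Modulo 2, the degree of a vertex `w` in the edge set of an `s`–`t` trail is
`[w = s] + [w = t]`. Since `G + H` is Eulerian, deleting the edges of `P₁` and `P₂` from `G`
leaves an edge set `A` whose only odd-degree vertices are `s₃` and `t₃`. Walking from `s₃`
inside `A` without reusing edges can only get stuck at a vertex of odd remaining degree, so the
walk reaches `t₃`.
-/

def endpointCount {V : Type} [DecidableEq V] (p : V × V) (w : V) : ℕ :=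
  (if p.1 = w then 1 else 0) + (if p.2 = w then 1 else 0)

section Parity

variable {V E : Type} [DecidableEq V]

lemma endpointCount_swap (a b w : V) : endpointCount (b, a) w = endpointCount (a, b) w :=
  Nat.add_comm _ _

lemma endpointCount_add_endpointCount (a b c w : V) :
    ((endpointCount (a, b) w + endpointCount (b, c) w : ℕ) : ZMod 2) = endpointCount (a, c) w := by
  unfold endpointCount
  by_cases ha : a = w <;> by_cases hb : b = w <;> by_cases hc : c = w <;> simp [ha, hb, hc] <;>
    decide

lemma endpointCount_eq_of_incident {G : E → V × V} {e : E} {u v : V}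
    (he : G e = (u, v) ∨ G e = (v, u)) (w : V) :
    endpointCount (G e) w = endpointCount (u, v) w := by
  rcases he with h | h <;> simp [h, endpointCount_swap]

lemma mdeg_eq_sum_endpointCount [Fintype E] (G : E → V × V) (w : V) :
    mdeg G w = ∑ e, endpointCount (G e) w := by
  rw [mdeg, Set.ncard_eq_toFinset_card', Set.toFinset_ofPred, Finset.card_filter,
    Fintype.sum_prod_type]
  refine Finset.sum_congr rfl fun e _ => ?_
  by_cases h1 : (G e).1 = w <;> by_cases h2 : (G e).2 = w <;>
    simp [Finset.filter_insert, Finset.filter_singleton, h1, h2, endpointCount]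

lemma MWalk.sum_endpointCount_edges {G : E → V × V} {u v : V} (p : MWalk G u v) (w : V) :
    (((p.edges.map fun e => endpointCount (G e) w).sum : ℕ) : ZMod 2) =
      endpointCount (u, v) w := by
  induction p with
  | nil x =>
    simp only [MWalk.edges, List.map_nil, List.sum_nil, Nat.cast_zero]
    unfold endpointCount
    split_ifs <;> decide
  | cons e he tail ih =>
    rw [MWalk.edges, List.map_cons, List.sum_cons, Nat.cast_add, ih,
      endpointCount_eq_of_incident he, ← Nat.cast_add, endpointCount_add_endpointCount]

lemma exists_trail_of_parity (G : E → V × V) (A : Finset E) (s t : V)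
    (hA : ∀ w, ((∑ e ∈ A, endpointCount (G e) w : ℕ) : ZMod 2) = endpointCount (s, t) w) :
    ∃ p : MWalk G s t, p.edges.Nodup ∧ ∀ e ∈ p.edges, e ∈ A := by
  classical
  induction A using Finset.strongInduction generalizing s with
  | _ A ih =>
  by_cases hst : s = t
  · subst hst
    exact ⟨.nil s, List.nodup_nil, by simp [MWalk.edges]⟩
  have hodd : ∑ e ∈ A, endpointCount (G e) s ≠ 0 := by
    intro h
    have := hA s
    rw [h] at this
    simp [endpointCount, Ne.symm hst] at this
  obtain ⟨e, heA, hes⟩ := Finset.exists_ne_zero_of_sum_ne_zero hodd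
  obtain ⟨u, he⟩ : ∃ u, G e = (s, u) ∨ G e = (u, s) := by
    by_cases h : (G e).1 = s
    · exact ⟨(G e).2, .inl (by rw [← h])⟩
    · have h' : (G e).2 = s := by by_contra h'; simp [endpointCount, h, h'] at hes
      exact ⟨(G e).1, .inr (by rw [← h'])⟩
  have hrest : ∀ w, ((∑ x ∈ A.erase e, endpointCount (G x) w : ℕ) : ZMod 2) =
      endpointCount (u, t) w := by
    intro w
    have hsplit := congrArg (fun n : ℕ => (n : ZMod 2)) (Finset.sum_erase_add A _ heA :
      ∑ x ∈ A.erase e, endpointCount (G x) w + endpointCount (G e) w = _)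
    rw [hA, ← endpointCount_add_endpointCount s u t, Nat.cast_add, Nat.cast_add,
      endpointCount_eq_of_incident he] at hsplit
    linear_combination hsplit
  obtain ⟨p, hp, hpA⟩ := ih _ (Finset.erase_ssubset heA) u hrest
  refine ⟨.cons e he p, List.nodup_cons.mpr ⟨fun h => ?_, hp⟩, ?_⟩
  · exact Finset.notMem_erase e A (hpA e h)
  · simp only [MWalk.edges, List.mem_cons, forall_eq_or_imp]
    exact ⟨heA, fun x hx => Finset.mem_of_mem_erase (hpA x hx)⟩

end Parity

section Instance

variable {V E E' : Type} {G : E → V × V}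

lemma mfeasible_three {s₁ t₁ s₂ t₂ s₃ t₃ : V}
    (P₁ : MWalk G s₁ t₁) (P₂ : MWalk G s₂ t₂) (P₃ : MWalk G s₃ t₃)
    (h₁₂ : P₁.edges.Disjoint P₂.edges) (h₁₃ : P₁.edges.Disjoint P₃.edges)
    (h₂₃ : P₂.edges.Disjoint P₃.edges) :
    MFeasible G ![(s₁, t₁), (s₂, t₂), (s₃, t₃)] := by
  refine ⟨fun | 0 => P₁ | 1 => P₂ | 2 => P₃, fun i j hij => ?_⟩
  fin_cases i <;> fin_cases j <;> first
    | exact absurd rfl hij | assumption | exact List.disjoint_comm.mp ‹_›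

variable [DecidableEq V]

lemma MEulerian.sum_endpointCount_compl [Fintype E] [DecidableEq E] [Fintype E'] {H : E' → V × V}
    (euler : MEulerian G H) (S : Finset E) (w : V) :
    ((∑ e ∈ Sᶜ, endpointCount (G e) w : ℕ) : ZMod 2) =
      ((∑ e ∈ S, endpointCount (G e) w + ∑ i, endpointCount (H i) w : ℕ) : ZMod 2) := by
  have heven := ZMod.natCast_eq_zero_iff_even.mpr (euler w)
  rw [mdeg_eq_sum_endpointCount, mdeg_eq_sum_endpointCount, ← Finset.sum_add_sum_compl S,
    Nat.cast_add, Nat.cast_add, add_assoc, add_left_comm, CharTwo.add_eq_zero] at heven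
  rw [heven, Nat.cast_add]

lemma sum_endpointCount_edges_append [DecidableEq E] {s₁ t₁ s₂ t₂ : V}
    (P₁ : MWalk G s₁ t₁) (P₂ : MWalk G s₂ t₂) (h : (P₁.edges ++ P₂.edges).Nodup) (w : V) :
    ((∑ e ∈ (P₁.edges ++ P₂.edges).toFinset, endpointCount (G e) w : ℕ) : ZMod 2) =
      endpointCount (s₁, t₁) w + endpointCount (s₂, t₂) w := by
  rw [List.sum_toFinset _ h, List.map_append, List.sum_append, Nat.cast_add,
    P₁.sum_endpointCount_edges, P₂.sum_endpointCount_edges]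

end Instance

/-- Let `(G, H)` be an Eulerian instance with three pairs of
terminals. If there are edge-disjoint paths `P₁ : s₁–t₁` and `P₂ : s₂–t₂` in
`G`, then there is also a path `P₃ : s₃–t₃` in `G` edge-disjoint from both;
that is, `(G, H)` is feasible. -/
theorem statement2 {V E : Type} [Fintype E]
    (G : E → V × V) (s1 t1 s2 t2 s3 t3 : V)
    (H : Fin 3 → V × V) (hH : H = ![(s1, t1), (s2, t2), (s3, t3)])
    (euler : MEulerian G H)
    (P1 : MWalk G s1 t1) (P2 : MWalk G s2 t2)
    (hP1 : P1.edges.Nodup) (hP2 : P2.edges.Nodup)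
    (hdisj : P1.edges.Disjoint P2.edges) :
    (∃ P3 : MWalk G s3 t3, P3.edges.Nodup ∧
        P3.edges.Disjoint P1.edges ∧ P3.edges.Disjoint P2.edges) ∧
      MFeasible G H := by
  classical
  subst hH
  set S := (P1.edges ++ P2.edges).toFinset
  have hparity : ∀ w, ((∑ e ∈ Sᶜ, endpointCount (G e) w : ℕ) : ZMod 2) =
      endpointCount (s3, t3) w := by
    intro w
    rw [euler.sum_endpointCount_compl, Nat.cast_add,
      sum_endpointCount_edges_append P1 P2 (hP1.append hP2 hdisj), Fin.sum_univ_three]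
    push_cast
    rw [← add_assoc, CharTwo.add_self_eq_zero, zero_add]
  obtain ⟨P3, hP3, hP3S⟩ := exists_trail_of_parity G Sᶜ s3 t3 hparity
  have h13 : P3.edges.Disjoint P1.edges := fun e h3 h1 =>
    Finset.mem_compl.mp (hP3S e h3) (by simp [S, h1])
  have h23 : P3.edges.Disjoint P2.edges := fun e h3 h2 =>
    Finset.mem_compl.mp (hP3S e h3) (by simp [S, h2])
  exact ⟨⟨P3, hP3, h13, h23⟩, mfeasible_three P1 P2 P3 hdisj h13.symm h23.symm⟩
end

section
/- Let (G,H) be an Eulerian instance with two pairs of terminals, H = (VG, {s1t1, s2t2}). If G is connected, then (G,H) is feasible, i.e. there exist edge-disjoint paths P1 from s1 to t1 and P2 from s2 to t2 in G. -/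
/-!
Route `P₁` along any trail from `s₁` to `t₁`; one exists because `G` is connected. Every walk
has an odd number of edge-ends at a vertex exactly when the vertex is one of its two distinct
endpoints, so by the Eulerian condition `s₂` and `t₂` are the only odd vertices of `G - P₁`.
A component has even total degree, so the component of `t₂` in `G - P₁` contains a second odd
vertex, which must be `s₂`; a walk between them is `P₂`.
-/

namespace MWalk

variable {V E F : Type} {G : E → V × V}

def mapEdges {K : F → V × V} (f : F → E) (hf : ∀ e, G (f e) = K e) :
    {u v : V} → MWalk K u v → MWalk G u v
  | _, _, nil v => nil v
  | _, _, cons e he p => cons (f e) (hf e ▸ he) (p.mapEdges f hf)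

@[simp] lemma edges_mapEdges {K : F → V × V} (f : F → E) (hf : ∀ e, G (f e) = K e) {u v : V}
    (p : MWalk K u v) : (p.mapEdges f hf).edges = p.edges.map f := by
  induction p with
  | nil => rfl
  | cons e he p ih => simp [mapEdges, edges, ih]

lemma exists_edges_suffix_of_mem {v w z : V} (q : MWalk G v w) {e : E} (he : e ∈ q.edges)
    (hz : (G e).1 = z ∨ (G e).2 = z) : ∃ q' : MWalk G z w, q'.edges <:+ q.edges := by
  induction q with
  | nil => simp [edges] at he
  | @cons v v' w f hf r ih =>
    rw [edges, List.mem_cons] at he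
    rcases he with rfl | he
    · have hz' : z = v ∨ z = v' := by
        rcases hf with hf | hf <;> rw [hf] at hz <;> rcases hz with rfl | rfl <;> simp
      rcases hz' with rfl | rfl
      · exact ⟨cons e hf r, List.suffix_refl _⟩
      · exact ⟨r, List.suffix_cons _ _⟩
    · obtain ⟨q', hq'⟩ := ih he
      exact ⟨q', hq'.trans (List.suffix_cons _ _)⟩

lemma exists_edges_nodup {u w : V} (p : MWalk G u w) : ∃ q : MWalk G u w, q.edges.Nodup := by
  induction p with
  | nil v => exact ⟨nil v, List.nodup_nil⟩
  | @cons u v w e he p ih =>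
    obtain ⟨q, hq⟩ := ih
    by_cases heq : e ∈ q.edges
    · obtain ⟨q', hq'⟩ := q.exists_edges_suffix_of_mem (z := u) heq
        (by rcases he with he | he <;> simp [he])
      exact ⟨q', hq.sublist hq'.sublist⟩
    · exact ⟨cons e he q, List.nodup_cons.2 ⟨heq, hq⟩⟩

end MWalk

section Parity

variable {V E : Type} [DecidableEq V]

def incidence (x : V) (p : V × V) : ℕ :=
  (if p.1 = x then 1 else 0) + (if p.2 = x then 1 else 0)

lemma incidence_swap (x : V) (p : V × V) : incidence x p.swap = incidence x p := by
  simp only [incidence, Prod.fst_swap, Prod.snd_swap, add_comm]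

lemma mdeg_eq_sum_incidence [Fintype E] (G : E → V × V) (x : V) :
    mdeg G x = ∑ e, incidence x (G e) := by
  rw [mdeg, Set.ncard_eq_toFinset_card', Set.toFinset_ofPred, Finset.card_filter,
    Fintype.sum_prod_type]
  simp only [Fintype.sum_bool, cond_true, cond_false, incidence]

lemma MWalk.even_sum_incidence {G : E → V × V} {u w : V} (p : MWalk G u w) (x : V) :
    Even ((p.edges.map fun e => incidence x (G e)).sum + incidence x (u, w)) := by
  induction p with
  | nil v => simp [MWalk.edges, incidence]
  | @cons u v w e he p ih =>
    have hinc : incidence x (G e) = incidence x (u, v) := by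
      rcases he with he | he
      · rw [he]
      · rw [he, ← incidence_swap, Prod.swap_prod_mk]
    rw [Nat.even_iff] at ih ⊢
    simp only [MWalk.edges, List.map_cons, List.sum_cons, hinc] at ih ⊢
    simp only [incidence] at ih ⊢
    split_ifs at ih ⊢ <;> omega

lemma mdeg_eq_sum_incidence_add_mdeg_compl [Fintype E] [DecidableEq E] (G : E → V × V)
    {l : List E} (hl : l.Nodup) (x : V) :
    mdeg G x = (l.map fun e => incidence x (G e)).sum + mdeg (fun e : {e // e ∉ l} => G e) x := by
  rw [mdeg_eq_sum_incidence, mdeg_eq_sum_incidence, ← List.sum_toFinset _ hl,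
    ← Finset.sum_filter_add_sum_filter_not Finset.univ (· ∈ l.toFinset)]
  congr 1
  · congr 1
    ext e
    simp
  · exact Finset.sum_subtype (p := (· ∉ l)) _ (by simp) _

lemma even_sum_mdeg_of_forall_mem_iff [Fintype E] (G : E → V × V) (T : Finset V)
    (hT : ∀ e, (G e).1 ∈ T ↔ (G e).2 ∈ T) : Even (∑ y ∈ T, mdeg G y) := by
  simp only [mdeg_eq_sum_incidence]
  rw [Finset.sum_comm]
  refine Finset.even_sum _ fun e _ => ?_
  simp only [incidence, Finset.sum_add_distrib, Finset.sum_ite_eq, hT e]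
  exact ⟨_, rfl⟩

end Parity

lemma exists_odd_mdeg_mwalk {V E : Type} [Fintype E] {G : E → V × V} {x : V}
    (hx : Odd (mdeg G x)) : ∃ y ≠ x, Odd (mdeg G y) ∧ Nonempty (MWalk G y x) := by
  classical
  set S := insert x (Finset.univ.biUnion fun e => {(G e).1, (G e).2})
  have hS : ∀ e, (G e).1 ∈ S ∧ (G e).2 ∈ S := fun e =>
    ⟨Finset.mem_insert_of_mem (Finset.mem_biUnion.2 ⟨e, Finset.mem_univ _, by simp⟩),
      Finset.mem_insert_of_mem (Finset.mem_biUnion.2 ⟨e, Finset.mem_univ _, by simp⟩)⟩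
  set T := S.filter fun y => Nonempty (MWalk G y x)
  have hT : ∀ e, (G e).1 ∈ T ↔ (G e).2 ∈ T := by
    intro e
    simp only [T, Finset.mem_filter, (hS e).1, (hS e).2, true_and]
    exact ⟨fun ⟨p⟩ => ⟨.cons e (Or.inr rfl) p⟩,
      fun ⟨p⟩ => ⟨.cons e (Or.inl rfl) p⟩⟩
  have hxT : x ∈ T := Finset.mem_filter.2 ⟨Finset.mem_insert_self _ _, ⟨.nil x⟩⟩
  by_contra! hnone
  have hrest : Even (∑ y ∈ T.erase x, mdeg G y) := by
    refine Finset.even_sum _ fun y hy => Nat.not_odd_iff_even.1 fun hodd => ?_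
    obtain ⟨hyx, hyT⟩ := Finset.mem_erase.1 hy
    exact (hnone y hyx hodd).false (Finset.mem_filter.1 hyT).2.some
  have htotal := even_sum_mdeg_of_forall_mem_iff G T hT
  rw [← Finset.add_sum_erase T _ hxT, Nat.even_add] at htotal
  exact Nat.not_even_iff_odd.2 hx (htotal.2 hrest)

lemma nonempty_mwalk_of_even_mdeg_add_incidence {V E : Type} [DecidableEq V] [Fintype E]
    {G : E → V × V} {a b : V} (h : ∀ x, Even (mdeg G x + incidence x (a, b))) :
    Nonempty (MWalk G a b) := by
  by_cases hab : a = b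
  · exact hab ▸ ⟨.nil a⟩
  have hodd : ∀ x, Odd (mdeg G x) ↔ x = a ∨ x = b := by
    intro x
    have hx := h x
    rw [Nat.even_iff] at hx
    rw [Nat.odd_iff]
    simp only [incidence] at hx
    split_ifs at hx <;> grind
  obtain ⟨y, hyb, hy, hwalk⟩ := exists_odd_mdeg_mwalk ((hodd b).2 (Or.inr rfl))
  obtain rfl : y = a := ((hodd y).1 hy).resolve_right hyb
  exact hwalk

/-- An Eulerian instance `(G, H)` with two pairs of terminals,
`H = (VG, {s₁t₁, s₂t₂})`, and `G` connected is feasible: there are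
edge-disjoint paths `P₁ : s₁–t₁` and `P₂ : s₂–t₂` in `G`. -/
theorem statement5 {V E : Type} [Fintype E]
    (G : E → V × V) (s1 t1 s2 t2 : V)
    (H : Fin 2 → V × V) (hH : H = ![(s1, t1), (s2, t2)])
    (euler : MEulerian G H)
    (hconn : MConnected G) :
    ∃ (P1 : MWalk G s1 t1) (P2 : MWalk G s2 t2), P1.edges.Disjoint P2.edges := by
  classical
  subst hH
  obtain ⟨P1, hP1⟩ := (hconn s1 t1).some.exists_edges_nodup
  have hD : ∀ x, Even (mdeg (fun e : {e // e ∉ P1.edges} => G e) x + incidence x (s2, t2)) := by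
    intro x
    have hG := euler x
    have hP1x := P1.even_sum_incidence x
    rw [mdeg_eq_sum_incidence_add_mdeg_compl G hP1 x, mdeg_eq_sum_incidence ![_, _],
      Fin.sum_univ_two] at hG
    simp only [Matrix.cons_val_zero, Matrix.cons_val_one] at hG
    rw [Nat.even_iff] at hG hP1x ⊢
    omega
  obtain ⟨P2⟩ := nonempty_mwalk_of_even_mdeg_add_incidence hD
  refine ⟨P1, P2.mapEdges Subtype.val fun _ => rfl, ?_⟩
  rw [MWalk.edges_mapEdges]
  intro e h1 h2
  obtain ⟨e', -, rfl⟩ := List.mem_map.1 h2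
  exact e'.2 h1
end

section
/- Let G be an undirected graph with distinct nodes s and t, and let F be a balanced arc set in G⃗. Then F decomposes into a collection P_st of arc-disjoint s–t paths, a collection P_ts of arc-disjoint t–s paths, and a collection C of arc-disjoint cycles (all parts pairwise arc-disjoint and together covering F), and every such decomposition satisfies |P_st| − |P_ts| = val(F). -/
/-!
The digraph `G⃗` associated with the multigraph `G : E → V × V` has the arc set
`E × Bool`: the arc `(e, true)` traverses edge `e` from `(G e).1` to `(G e).2`,
and `(e, false)` is the oppositely directed arc.
-/

/-- The tail of an arc of `G⃗`. -/
def arcTail {V E : Type} (G : E → V × V) (a : E × Bool) : V :=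
  cond a.2 (G a.1).1 (G a.1).2

/-- The head of an arc of `G⃗`. -/
def arcHead {V E : Type} (G : E → V × V) (a : E × Bool) : V :=
  cond a.2 (G a.1).2 (G a.1).1

/-- The reverse arc `a⁻¹`. -/
def arcInv {E : Type} (a : E × Bool) : E × Bool := (a.1, !a.2)

/-- `|F ∩ δ^out(v)|`, the number of arcs of `F` leaving `v`. -/
noncomputable def outCount {V E : Type} (G : E → V × V) (F : Finset (E × Bool)) (v : V) : ℕ :=
  Set.ncard {a : E × Bool | a ∈ F ∧ arcTail G a = v}

/-- `|F ∩ δ^in(v)|`, the number of arcs of `F` entering `v`. -/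
noncomputable def inCount {V E : Type} (G : E → V × V) (F : Finset (E × Bool)) (v : V) : ℕ :=
  Set.ncard {a : E × Bool | a ∈ F ∧ arcHead G a = v}

/-- `F ⊆ AG⃗` is balanced (w.r.t. the source `s` and the sink `t`) if
`|F ∩ δ^in(v)| = |F ∩ δ^out(v)|` for every `v ∈ VG − {s, t}`. -/
def BalancedArcs {V E : Type} (G : E → V × V) (s t : V) (F : Finset (E × Bool)) : Prop :=
  ∀ v : V, v ≠ s → v ≠ t → inCount G F v = outCount G F v

/-- The value `val(F) = |F ∩ δ^out(s)| − |F ∩ δ^in(s)|` of an arc set. -/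
noncomputable def bval {V E : Type} (G : E → V × V) (s : V) (F : Finset (E × Bool)) : ℤ :=
  (outCount G F s : ℤ) - (inCount G F s : ℤ)

/-- Directed walks in `G⃗`. -/
inductive DWalk {V E : Type} (G : E → V × V) : V → V → Type where
  | nil (v : V) : DWalk G v v
  | cons {u v w : V} (a : E × Bool) (ht : arcTail G a = u) (hh : arcHead G a = v)
      (tail : DWalk G v w) : DWalk G u w

namespace DWalk
/-- The list of arcs traversed by a directed walk. -/
def arcs {V E : Type} {G : E → V × V} : {u v : V} → DWalk G u v → List (E × Bool)
  | _, _, nil _ => []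
  | _, _, cons a _ _ p => a :: p.arcs
end DWalk

/-- The arcs of the residual digraph `G⃗_F = (VG, (AG⃗ − F) ∪ F⁻¹)`. -/
def residArcs {E : Type} (F : Finset (E × Bool)) : Set (E × Bool) :=
  {a | a ∉ F ∨ arcInv a ∈ F}

/-- A decomposition of an arc set `F` into a collection `pst` of `s`–`t` paths,
a collection `pts` of `t`–`s` paths, and a collection `cyc` of cycles, all of
them pairwise arc-disjoint and together covering `F` exactly. -/
structure BalDecomp {V E : Type} (G : E → V × V) (s t : V) (F : Finset (E × Bool)) where
  /-- the `s`–`t` paths -/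
  pst : List (DWalk G s t)
  /-- the `t`–`s` paths -/
  pts : List (DWalk G t s)
  /-- the cycles (nonempty closed walks) -/
  cyc : List ((v : V) × DWalk G v v)
  cyc_ne : ∀ c ∈ cyc, c.2.arcs ≠ []
  /-- all the walks are pairwise arc-disjoint (and each is arc-simple) -/
  disj : ((pst.map DWalk.arcs ++ pts.map DWalk.arcs ++
      cyc.map (fun c => c.2.arcs)).flatten).Nodup
  /-- together they use exactly the arcs of `F` -/
  cover : ∀ a : E × Bool,
    a ∈ (pst.map DWalk.arcs ++ pts.map DWalk.arcs ++
      cyc.map (fun c => c.2.arcs)).flatten ↔ a ∈ F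

/-!
Peel off one trail at a time. A trail in `F` that can be extended at neither end must, by
balance, either be closed or run between `s` and `t` (at any other end vertex the trail would
use more arcs of `F` on one side than the other); removing its arcs keeps `F` balanced.
For the count, the excess `|δ^out(s)| − |δ^in(s)|` of an arc-disjoint cover of `F` is the sum
of the excesses of its walks: `1` for an `s`–`t` path, `-1` for a `t`–`s` path, `0` for a cycle.
-/

variable {V E : Type} {G : E → V × V}

theorem List.Nodup.countP_eq_ncard {α : Type} [DecidableEq α] {l : List α} (hl : l.Nodup)
    (p : α → Prop) [DecidablePred p] :
    l.countP (fun a => decide (p a)) = {a | a ∈ l.toFinset ∧ p a}.ncard := by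
  rw [List.countP_eq_length_filter, ← List.toFinset_card_of_nodup (hl.filter _),
    ← Set.ncard_coe_finset]
  congr 1
  ext a
  simp

theorem ncard_sep_le_of_forall {α β : Type} {f : α → β} {x : β} {A B : Finset α}
    (h : ∀ a ∈ A, f a = x → a ∈ B) :
    {a | a ∈ A ∧ f a = x}.ncard ≤ {a | a ∈ B ∧ f a = x}.ncard :=
  Set.ncard_le_ncard (fun a ha => ⟨h a ha.1 ha.2, ha.2⟩)
    (B.finite_toSet.subset fun _ ha => Finset.mem_coe.2 ha.1)

theorem ncard_sep_sdiff {α β : Type} [DecidableEq α] {f : α → β} {x : β} {A B : Finset α}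
    (h : A ⊆ B) :
    {a | a ∈ B \ A ∧ f a = x}.ncard =
      {a | a ∈ B ∧ f a = x}.ncard - {a | a ∈ A ∧ f a = x}.ncard := by
  have hsub : {a | a ∈ A ∧ f a = x} ⊆ {a | a ∈ B ∧ f a = x} := fun a ha => ⟨h ha.1, ha.2⟩
  rw [← Set.ncard_sdiff hsub (A.finite_toSet.subset fun _ ha => ha.1)]
  congr 1
  ext a
  simp only [Finset.mem_sdiff, Set.mem_ofPred_eq, Set.mem_sdiff]
  tauto

def netOut [DecidableEq V] (G : E → V × V) (l : List (E × Bool)) (x : V) : ℤ :=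
  l.countP (arcTail G · = x) - l.countP (arcHead G · = x)

theorem netOut_flatten [DecidableEq V] (L : List (List (E × Bool))) (x : V) :
    netOut G L.flatten x = (L.map (netOut G · x)).sum := by
  induction L with
  | nil => simp [netOut]
  | cons l L ih =>
    simp only [netOut, List.flatten_cons, List.countP_append, List.map_cons,
      List.sum_cons] at ih ⊢
    push_cast
    linarith

theorem List.Nodup.netOut_eq [DecidableEq V] [DecidableEq E] {l : List (E × Bool)}
    (hl : l.Nodup) (x : V) :
    netOut G l x = (outCount G l.toFinset x : ℤ) - inCount G l.toFinset x := by
  rw [netOut, hl.countP_eq_ncard, hl.countP_eq_ncard, outCount, inCount]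

namespace DWalk

def append : {u v w : V} → DWalk G u v → DWalk G v w → DWalk G u w
  | _, _, _, nil _, q => q
  | _, _, _, cons a ht hh p, q => cons a ht hh (p.append q)

@[simp]
theorem arcs_append : ∀ {u v w : V} (p : DWalk G u v) (q : DWalk G v w),
    (p.append q).arcs = p.arcs ++ q.arcs
  | _, _, _, nil _, _ => rfl
  | _, _, _, cons a _ _ p, q => congrArg (a :: ·) (arcs_append p q)

def concat {u v : V} (p : DWalk G u v) (a : E × Bool) (ha : arcTail G a = v) :
    DWalk G u (arcHead G a) :=
  p.append (cons a ha rfl (nil _))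

@[simp]
theorem arcs_concat {u v : V} (p : DWalk G u v) (a : E × Bool) (ha : arcTail G a = v) :
    (p.concat a ha).arcs = p.arcs ++ [a] := by
  simp [concat, arcs]

theorem netOut_arcs [DecidableEq V] (x : V) : ∀ {u v : V} (w : DWalk G u v),
    netOut G w.arcs x = (if u = x then 1 else 0) - (if v = x then 1 else 0)
  | _, _, nil _ => by simp [netOut, arcs]
  | _, _, cons a ht hh w => by
    have ih := netOut_arcs x w
    subst ht hh
    simp only [netOut, arcs, List.countP_cons] at ih ⊢
    split_ifs at ih ⊢ <;> simp_all <;> omega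

structure IsTrailIn (F : Finset (E × Bool)) {u v : V} (w : DWalk G u v) : Prop where
  nodup : w.arcs.Nodup
  subset : ∀ a ∈ w.arcs, a ∈ F

variable {F : Finset (E × Bool)}

theorem IsTrailIn.length_lt_card {u v : V} {w : DWalk G u v} (hw : w.IsTrailIn F)
    {a : E × Bool} (haF : a ∈ F) (ha : a ∉ w.arcs) : w.arcs.length < F.card := by
  classical
  rw [← List.toFinset_card_of_nodup hw.nodup]
  exact Finset.card_lt_card (Finset.ssubset_iff_subset_ne.2
    ⟨fun b hb => hw.subset b (List.mem_toFinset.1 hb),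
      fun h => ha (List.mem_toFinset.1 (h ▸ haF))⟩)

theorem IsTrailIn.cons {u v : V} {w : DWalk G u v} (hw : w.IsTrailIn F) {a : E × Bool}
    (haF : a ∈ F) (ha : a ∉ w.arcs) (hh : arcHead G a = u) : (DWalk.cons a rfl hh w).IsTrailIn F :=
  ⟨List.nodup_cons.2 ⟨ha, hw.nodup⟩,
    fun b hb => (List.mem_cons.1 hb).elim (· ▸ haF) (hw.subset b)⟩

theorem IsTrailIn.concat {u v : V} {w : DWalk G u v} (hw : w.IsTrailIn F) {a : E × Bool}
    (haF : a ∈ F) (ha : a ∉ w.arcs) (ht : arcTail G a = v) : (w.concat a ht).IsTrailIn F :=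
  ⟨by simpa using hw.nodup.concat ha, fun b hb => by
    rw [arcs_concat, List.mem_append, List.mem_singleton] at hb
    exact hb.elim (hw.subset b) (· ▸ haF)⟩

theorem IsTrailIn.exists_maximal {u v : V} {w : DWalk G u v} (hw : w.IsTrailIn F) :
    ∃ (u' v' : V) (w' : DWalk G u' v'), w'.IsTrailIn F ∧ (∀ a ∈ w.arcs, a ∈ w'.arcs) ∧
      (∀ a ∈ F, arcHead G a = u' → a ∈ w'.arcs) ∧ (∀ a ∈ F, arcTail G a = v' → a ∈ w'.arcs) := by
  by_cases hin : ∃ a ∈ F, arcHead G a = u ∧ a ∉ w.arcs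
  · obtain ⟨a, haF, hau, ha⟩ := hin
    have := hw.length_lt_card haF ha
    obtain ⟨u', v', w', hw', hsub, hmax⟩ := (hw.cons haF ha hau).exists_maximal
    exact ⟨u', v', w', hw', fun b hb => hsub b (List.mem_cons_of_mem a hb), hmax⟩
  by_cases hout : ∃ a ∈ F, arcTail G a = v ∧ a ∉ w.arcs
  · obtain ⟨a, haF, hav, ha⟩ := hout
    have := hw.length_lt_card haF ha
    obtain ⟨u', v', w', hw', hsub, hmax⟩ := (hw.concat haF ha hav).exists_maximal
    exact ⟨u', v', w', hw', fun b hb => hsub b (by simp [hb]), hmax⟩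
  push Not at hin hout
  exact ⟨u, v, w, hw, fun _ h => h, hin, hout⟩
termination_by F.card - w.arcs.length
decreasing_by
  all_goals
    simp only [arcs, arcs_concat, List.length_cons, List.length_append]
    omega

end DWalk

namespace BalancedArcs

variable {s t u v : V} {F : Finset (E × Bool)}

theorem trail_ends (hbal : BalancedArcs G s t F) {w : DWalk G u v} (hw : w.IsTrailIn F)
    (hu : ∀ a ∈ F, arcHead G a = u → a ∈ w.arcs) (hv : ∀ a ∈ F, arcTail G a = v → a ∈ w.arcs) :
    u = v ∨ (u = s ∧ v = t) ∨ (u = t ∧ v = s) := by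
  classical
  have hwF : ∀ a ∈ w.arcs.toFinset, a ∈ F := fun a ha => hw.subset a (List.mem_toFinset.1 ha)
  have hv' : v = u ∨ v = s ∨ v = t := by
    by_contra! ⟨hvu, hvs, hvt⟩
    have hflow := w.netOut_arcs v
    rw [hw.nodup.netOut_eq, if_neg hvu.symm, if_pos rfl] at hflow
    have hout : outCount G F v ≤ outCount G w.arcs.toFinset v :=
      ncard_sep_le_of_forall fun a ha hav => by simpa using hv a ha hav
    have hin : inCount G w.arcs.toFinset v ≤ inCount G F v :=
      ncard_sep_le_of_forall fun a ha _ => hwF a ha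
    rw [hbal v hvs hvt] at hin
    omega
  have hu' : u = v ∨ u = s ∨ u = t := by
    by_contra! ⟨huv, hus, hut⟩
    have hflow := w.netOut_arcs u
    rw [hw.nodup.netOut_eq, if_pos rfl, if_neg huv.symm] at hflow
    have hin : inCount G F u ≤ inCount G w.arcs.toFinset u :=
      ncard_sep_le_of_forall fun a ha hau => by simpa using hu a ha hau
    have hout : outCount G w.arcs.toFinset u ≤ outCount G F u :=
      ncard_sep_le_of_forall fun a ha _ => hwF a ha
    rw [← hbal u hus hut] at hout
    omega
  rcases hu' with rfl | rfl | rfl <;> rcases hv' with h | rfl | rfl <;> tauto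

theorem sdiff_trail [DecidableEq E] (hbal : BalancedArcs G s t F) {w : DWalk G u v}
    (hw : w.IsTrailIn F) (hends : u = v ∨ (u = s ∧ v = t) ∨ (u = t ∧ v = s)) :
    BalancedArcs G s t (F \ w.arcs.toFinset) := by
  classical
  intro x hxs hxt
  have hflow := w.netOut_arcs x
  have hends_x : (if u = x then (1 : ℤ) else 0) = if v = x then 1 else 0 := by
    rcases hends with rfl | ⟨rfl, rfl⟩ | ⟨rfl, rfl⟩ <;> simp [hxs.symm, hxt.symm]
  rw [hw.nodup.netOut_eq, hends_x, sub_self] at hflow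
  have hwF : w.arcs.toFinset ⊆ F := fun a ha => hw.subset a (by simpa using ha)
  have hin : inCount G (F \ w.arcs.toFinset) x = inCount G F x - inCount G w.arcs.toFinset x :=
    ncard_sep_sdiff hwF
  have hout : outCount G (F \ w.arcs.toFinset) x =
      outCount G F x - outCount G w.arcs.toFinset x :=
    ncard_sep_sdiff hwF
  rw [hin, hout, hbal x hxs hxt]
  omega

end BalancedArcs

namespace BalDecomp

variable {s t : V}

def arcList (pst : List (DWalk G s t)) (pts : List (DWalk G t s))
    (cyc : List ((v : V) × DWalk G v v)) : List (E × Bool) :=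
  (pst.map DWalk.arcs ++ pts.map DWalk.arcs ++ cyc.map (fun c => c.2.arcs)).flatten

def empty : BalDecomp G s t ∅ :=
  ⟨[], [], [], by simp, by simp, by simp⟩

theorem nonempty_of_perm [DecidableEq E] {F : Finset (E × Bool)} {l : List (E × Bool)}
    (hl : l.Nodup) (hlF : ∀ a ∈ l, a ∈ F) (d : BalDecomp G s t (F \ l.toFinset))
    (pst : List (DWalk G s t)) (pts : List (DWalk G t s)) (cyc : List ((v : V) × DWalk G v v))
    (hcyc : ∀ c ∈ cyc, c.2.arcs ≠ [])
    (hperm : (arcList pst pts cyc).Perm (l ++ arcList d.pst d.pts d.cyc)) :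
    Nonempty (BalDecomp G s t F) := by
  have hd : ∀ a, a ∈ arcList d.pst d.pts d.cyc ↔ a ∈ F ∧ a ∉ l := fun a =>
    (d.cover a).trans (by rw [Finset.mem_sdiff, List.mem_toFinset])
  refine ⟨⟨pst, pts, cyc, hcyc, hperm.nodup_iff.2 ?_, fun a => hperm.mem_iff.trans ?_⟩⟩
  · exact List.nodup_append.2 ⟨hl, d.disj, fun a ha b hb hab => ((hd b).1 hb).2 (hab ▸ ha)⟩
  · rw [List.mem_append, hd]
    by_cases ha : a ∈ l <;> simp [ha, hlF]

theorem nonempty_of_balanced {F : Finset (E × Bool)} (hbal : BalancedArcs G s t F) :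
    Nonempty (BalDecomp G s t F) := by
  classical
  induction F using Finset.strongInduction with
  | H F ih =>
  obtain rfl | ⟨a, haF⟩ := F.eq_empty_or_nonempty
  · exact ⟨empty⟩
  have harc : (DWalk.cons a rfl rfl (.nil _) : DWalk G _ _).IsTrailIn F :=
    ⟨by simp [DWalk.arcs], by simpa [DWalk.arcs] using haF⟩
  obtain ⟨u, v, w, hw, ha, hu, hv⟩ := harc.exists_maximal
  have haw : a ∈ w.arcs := ha a (by simp [DWalk.arcs])
  have hends := hbal.trail_ends hw hu hv
  have hlt : F \ w.arcs.toFinset ⊂ F :=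
    Finset.sdiff_ssubset (fun b hb => hw.subset b (by simpa using hb))
      ⟨a, List.mem_toFinset.2 haw⟩
  obtain ⟨d⟩ := ih _ hlt (hbal.sdiff_trail hw hends)
  rcases hends with rfl | ⟨rfl, rfl⟩ | ⟨rfl, rfl⟩
  · refine nonempty_of_perm hw.nodup hw.subset d d.pst d.pts (⟨u, w⟩ :: d.cyc)
      (List.forall_mem_cons.2 ⟨List.ne_nil_of_mem haw, d.cyc_ne⟩) ?_
    simpa [arcList] using ((List.perm_append_comm_assoc _ _ _).append_left _).trans
      (List.perm_append_comm_assoc _ _ _)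
  · exact nonempty_of_perm hw.nodup hw.subset d (w :: d.pst) d.pts d.cyc d.cyc_ne
      (by simp [arcList])
  · exact nonempty_of_perm hw.nodup hw.subset d d.pst (w :: d.pts) d.cyc d.cyc_ne
      (by simpa [arcList] using List.perm_append_comm_assoc _ _ _)

theorem length_sub_length (hst : s ≠ t) {F : Finset (E × Bool)} (d : BalDecomp G s t F) :
    (d.pst.length : ℤ) - d.pts.length = bval G s F := by
  classical
  have hF : (arcList d.pst d.pts d.cyc).toFinset = F :=
    Finset.ext fun a => List.mem_toFinset.trans (d.cover a)
  have hnet : netOut G (arcList d.pst d.pts d.cyc) s = bval G s F := by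
    have hnd : (arcList d.pst d.pts d.cyc).Nodup := d.disj
    rw [hnd.netOut_eq, hF, bval]
  rw [← hnet, arcList, netOut_flatten]
  simp [Function.comp_def, DWalk.netOut_arcs, hst.symm, sub_eq_add_neg]

end BalDecomp

theorem statement6_general {V E : Type}
    (G : E → V × V) (s t : V) (hst : s ≠ t)
    (F : Finset (E × Bool)) (hbal : BalancedArcs G s t F) :
    Nonempty (BalDecomp G s t F) ∧
      ∀ d : BalDecomp G s t F,
        (d.pst.length : ℤ) - (d.pts.length : ℤ) = bval G s F :=
  ⟨BalDecomp.nonempty_of_balanced hbal, BalDecomp.length_sub_length hst⟩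

/-- Every balanced arc set `F` decomposes into arc-disjoint
`s`–`t` paths, `t`–`s` paths and cycles covering `F`, and every such
decomposition satisfies `|P_st| − |P_ts| = val F`. -/
theorem statement6 {V E : Type} [Fintype E]
    (G : E → V × V) (s t : V) (hst : s ≠ t)
    (F : Finset (E × Bool)) (hbal : BalancedArcs G s t F) :
    Nonempty (BalDecomp G s t F) ∧
      ∀ d : BalDecomp G s t F,
        (d.pst.length : ℤ) - (d.pts.length : ℤ) = bval G s F :=
  statement6_general G s t hst F hbal
end

section
/- Let G be an undirected graph with distinct nodes s and t, let F be a balanced arc set in G⃗, and let P be an arc-simple s–t path in the residual digraph G⃗_F. Construct F' from F by adding all arcs a ∈ AP with a^{−1} ∉ F and removing all arcs a ∈ F with a^{−1} ∈ AP. Then F' is balanced and val(F') = val(F) + 1. -/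
/-!
Count arcs with signs: the net flow of an integer weighting `f` of the arcs at `v` is
`∑ₐ f a · ([tail a = v] - [head a = v])`, which is additive in `f`. Augmenting `F` along `P`
turns the indicator `1_F` into `1_F + 1_P - c`, where `c a = 1_P a · 1_F a⁻¹ + 1_F a · 1_P a⁻¹`
(this needs `P` to run in the residual digraph). Reversing an arc negates its incidence, so the
reversal-invariant `c` has no net flow anywhere, while the arc-simple `s`–`t` path `P` has net
flow `[s = v] - [t = v]`.
-/

section ArcInv

variable {V E : Type}

lemma arcInv_involutive : Function.Involutive (arcInv (E := E)) := by
  intro a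
  simp [arcInv]

lemma arcTail_arcInv (G : E → V × V) (a : E × Bool) : arcTail G (arcInv a) = arcHead G a := by
  rcases a with ⟨e, _ | _⟩ <;> rfl

lemma arcHead_arcInv (G : E → V × V) (a : E × Bool) : arcHead G (arcInv a) = arcTail G a := by
  rcases a with ⟨e, _ | _⟩ <;> rfl

end ArcInv

section Augment

variable {E : Type} [DecidableEq E]

def augmentAlong (F : Finset (E × Bool)) (L : List (E × Bool)) : Finset (E × Bool) :=
  F.filter (fun a => arcInv a ∉ L) ∪ L.toFinset.filter (fun a => arcInv a ∉ F)

def cancelCount (F : Finset (E × Bool)) (L : List (E × Bool)) (a : E × Bool) : ℤ :=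
  (if a ∈ L then 1 else 0) * (if arcInv a ∈ F then 1 else 0) +
    (if a ∈ F then 1 else 0) * (if arcInv a ∈ L then 1 else 0)

lemma cancelCount_arcInv (F : Finset (E × Bool)) (L : List (E × Bool)) (a : E × Bool) :
    cancelCount F L (arcInv a) = cancelCount F L a := by
  simp only [cancelCount, arcInv_involutive a]
  ring

lemma indicator_augmentAlong (F : Finset (E × Bool)) {L : List (E × Bool)}
    (hL : ∀ a ∈ L, a ∈ residArcs F) :
    (fun a => if a ∈ augmentAlong F L then (1 : ℤ) else 0) =
      (fun a => if a ∈ F then 1 else 0) + (fun a => if a ∈ L then 1 else 0) - cancelCount F L := by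
  ext a
  simp only [augmentAlong, cancelCount, Pi.add_apply, Pi.sub_apply]
  by_cases haL : a ∈ L
  · have hres : a ∉ F ∨ arcInv a ∈ F := hL a haL
    by_cases haF : a ∈ F <;> by_cases hiF : arcInv a ∈ F <;> by_cases hiL : arcInv a ∈ L <;>
      simp_all
  · by_cases haF : a ∈ F <;> by_cases hiF : arcInv a ∈ F <;> by_cases hiL : arcInv a ∈ L <;>
      simp_all

end Augment

section NetFlow

variable {V E : Type} [DecidableEq V]

def arcIncidence (G : E → V × V) (v : V) (a : E × Bool) : ℤ :=
  (if arcTail G a = v then 1 else 0) - (if arcHead G a = v then 1 else 0)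

lemma arcIncidence_arcInv (G : E → V × V) (v : V) (a : E × Bool) :
    arcIncidence G v (arcInv a) = -arcIncidence G v a := by
  simp only [arcIncidence, arcTail_arcInv, arcHead_arcInv]
  ring

variable [Fintype E]

def netFlow (G : E → V × V) (f : E × Bool → ℤ) (v : V) : ℤ :=
  ∑ a, f a * arcIncidence G v a

lemma netFlow_add (G : E → V × V) (f g : E × Bool → ℤ) (v : V) :
    netFlow G (f + g) v = netFlow G f v + netFlow G g v := by
  simp only [netFlow, Pi.add_apply, add_mul, Finset.sum_add_distrib]

lemma netFlow_sub (G : E → V × V) (f g : E × Bool → ℤ) (v : V) :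
    netFlow G (f - g) v = netFlow G f v - netFlow G g v := by
  simp only [netFlow, Pi.sub_apply, sub_mul, Finset.sum_sub_distrib]

lemma netFlow_eq_zero_of_arcInv_invariant (G : E → V × V) {f : E × Bool → ℤ}
    (hf : ∀ a, f (arcInv a) = f a) (v : V) : netFlow G f v = 0 := by
  have hneg : netFlow G f v = -netFlow G f v := by
    calc netFlow G f v = ∑ a, f (arcInv a) * arcIncidence G v (arcInv a) :=
          (arcInv_involutive.bijective.sum_comp (fun a => f a * arcIncidence G v a)).symm
      _ = -netFlow G f v := by
          simp only [netFlow, hf, arcIncidence_arcInv, mul_neg, Finset.sum_neg_distrib]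
  omega

variable [DecidableEq E]

lemma outCount_sub_inCount (G : E → V × V) (H : Finset (E × Bool)) (v : V) :
    (outCount G H v : ℤ) - inCount G H v = netFlow G (fun a => if a ∈ H then 1 else 0) v := by
  have hcount : ∀ p : E × Bool → Prop, [DecidablePred p] →
      (Set.ncard {a | a ∈ H ∧ p a} : ℤ) = ∑ a, if a ∈ H ∧ p a then 1 else 0 := by
    intro p _
    rw [Set.ncard_eq_toFinset_card', Set.toFinset_ofPred, Finset.card_filter]
    push_cast
    rfl
  rw [outCount, inCount, hcount, hcount, netFlow, ← Finset.sum_sub_distrib]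
  refine Finset.sum_congr rfl fun a _ => ?_
  by_cases ha : a ∈ H <;> simp [ha, arcIncidence]

lemma netFlow_walk (G : E → V × V) {u x : V} (W : DWalk G u x) (hW : W.arcs.Nodup) (v : V) :
    netFlow G (fun a => if a ∈ W.arcs then 1 else 0) v =
      (if u = v then 1 else 0) - (if x = v then 1 else 0) := by
  induction W with
  | nil => simp [DWalk.arcs, netFlow]
  | cons a ht hh W ih =>
    rw [DWalk.arcs, List.nodup_cons] at hW
    have hsplit : (fun b => if b ∈ a :: W.arcs then (1 : ℤ) else 0) =
        (fun b => if b = a then 1 else 0) + fun b => if b ∈ W.arcs then 1 else 0 := by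
      ext b
      by_cases hb : b = a
      · simp [hb, hW.1]
      · simp [hb]
    have hsingle : netFlow G (fun b => if b = a then 1 else 0) v = arcIncidence G v a := by
      simp [netFlow]
    rw [DWalk.arcs, hsplit, netFlow_add, hsingle, ih hW.2, arcIncidence, ht, hh]
    ring

lemma excess_augmentAlong (G : E → V × V) (F : Finset (E × Bool)) {u x : V} (W : DWalk G u x)
    (hres : ∀ a ∈ W.arcs, a ∈ residArcs F) (hW : W.arcs.Nodup) (v : V) :
    (outCount G (augmentAlong F W.arcs) v : ℤ) - inCount G (augmentAlong F W.arcs) v =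
      (outCount G F v : ℤ) - inCount G F v + ((if u = v then 1 else 0) - (if x = v then 1 else 0)) := by
  rw [outCount_sub_inCount, outCount_sub_inCount, indicator_augmentAlong F hres, netFlow_sub,
    netFlow_add, netFlow_walk G W hW,
    netFlow_eq_zero_of_arcInv_invariant G (cancelCount_arcInv F W.arcs)]
  ring

end NetFlow

/-- Augmenting a balanced arc set `F` along an arc-simple
`s`–`t` path `P` of the residual digraph `G⃗_F` (adding all arcs `a ∈ AP` with
`a⁻¹ ∉ F` and removing all arcs `a ∈ F` with `a⁻¹ ∈ AP`) yields a balanced arc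
set `F'` with `val F' = val F + 1`. -/
theorem statement7 {V E : Type} [Fintype E] [DecidableEq E]
    (G : E → V × V) (s t : V) (hst : s ≠ t)
    (F : Finset (E × Bool)) (hbal : BalancedArcs G s t F)
    (P : DWalk G s t) (hres : ∀ a ∈ P.arcs, a ∈ residArcs F) (hsimple : P.arcs.Nodup)
    (F' : Finset (E × Bool))
    (hF' : F' = (F.filter (fun a => arcInv a ∉ P.arcs)) ∪
        (P.arcs.toFinset.filter (fun a => arcInv a ∉ F))) :
    BalancedArcs G s t F' ∧ bval G s F' = bval G s F + 1 := by
  classical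
  obtain rfl : F' = augmentAlong F P.arcs := hF'
  have hexcess := excess_augmentAlong G F P hres hsimple
  constructor
  · intro v hvs hvt
    have := hexcess v
    rw [if_neg (Ne.symm hvs), if_neg (Ne.symm hvt), hbal v hvs hvt] at this
    omega
  · have := hexcess s
    rw [if_pos rfl, if_neg (Ne.symm hst)] at this
    simp only [bval]
    omega
end

section
/- Let (G,H) be an instance with s1t1 ∈ EH, let e = s1s1' be an edge of G, and let (G_e, H_e) be the instance obtained by the local move along e. If (G_e, H_e) is feasible, then (G,H) is feasible. -/
namespace MWalk

variable {V E F : Type} {G : E → V × V}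

def copy {a b a' b' : V} (w : MWalk G a b) (ha : a = a') (hb : b = b') : MWalk G a' b' :=
  ha ▸ hb ▸ w

@[simp]
theorem edges_copy {a b a' b' : V} (w : MWalk G a b) (ha : a = a') (hb : b = b') :
    (w.copy ha hb).edges = w.edges := by
  subst ha hb
  rfl

def map {G' : F → V × V} (f : E → F) (hf : ∀ e, G' (f e) = G e) :
    {u v : V} → MWalk G u v → MWalk G' u v
  | _, _, nil v => nil v
  | _, _, cons e he p => cons (f e) (hf e ▸ he) (p.map f hf)

@[simp]
theorem edges_map {G' : F → V × V} (f : E → F) (hf : ∀ e, G' (f e) = G e) :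
    ∀ {u v : V} (p : MWalk G u v), (p.map f hf).edges = p.edges.map f
  | _, _, nil _ => rfl
  | _, _, cons e _ p => by simp [map, edges, edges_map f hf p]

end MWalk

theorem MFeasible.of_replace {V E E' : Type} [DecidableEq E'] {G : E → V × V}
    {H H' : E' → V × V} (P : (i : E') → MWalk G (H' i).1 (H' i).2)
    (hP : ∀ i j, i ≠ j → (P i).edges.Disjoint (P j).edges)
    (i0 : E') (hH : ∀ i, i ≠ i0 → H' i = H i) (w : MWalk G (H i0).1 (H i0).2)
    (hw : ∀ i, i ≠ i0 → w.edges.Disjoint (P i).edges) :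
    MFeasible G H := by
  let Q : (i : E') → MWalk G (H i).1 (H i).2 := fun i =>
    if h : i = i0 then h ▸ w
    else (P i).copy (congrArg Prod.fst (hH i h)) (congrArg Prod.snd (hH i h))
  have hQ : ∀ i, (Q i).edges = if i = i0 then w.edges else (P i).edges := by
    intro i
    by_cases h : i = i0
    · subst h
      simp [Q]
    · simp [Q, h]
  refine ⟨Q, fun i j hij => ?_⟩
  rw [hQ i, hQ j]
  by_cases hi : i = i0 <;> by_cases hj : j = i0 <;> simp only [hi, hj, if_true, if_false]
  · exact absurd (hi.trans hj.symm) hij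
  · exact hw j hj
  · exact (hw i hi).symm
  · exact hP i j hij

/-- If the instance `(G_e, H_e)` obtained by the local move
along an edge `e = s₁s₁'` of `G` (delete `e` from `G`, replace the demand edge
`s₁t₁` by `s₁'t₁`) is feasible, then so is `(G, H)`. -/
theorem statement12 {V E E' : Type} [DecidableEq E']
    (G : E → V × V) (H : E' → V × V)
    (s1 t1 s1' : V) (i0 : E') (hi0 : H i0 = (s1, t1))
    (e0 : E) (he0 : G e0 = (s1, s1') ∨ G e0 = (s1', s1))
    (hfeas : MFeasible (fun e : {e : E // e ≠ e0} => G e.1)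
      (Function.update H i0 (s1', t1))) :
    MFeasible G H := by
  obtain ⟨P, hP⟩ := hfeas
  let P' i := (P i).map Subtype.val fun _ => rfl
  have hP' : ∀ i j, i ≠ j → (P' i).edges.Disjoint (P' j).edges := fun i j hij => by
    simpa [P'] using (hP i j hij).map Subtype.val_injective
  have he0P' : ∀ i, e0 ∉ (P' i).edges := by simp [P']
  let w : MWalk G (H i0).1 (H i0).2 :=
    (MWalk.cons e0 he0 ((P' i0).copy (by simp) (by simp) : MWalk G s1' t1)).copy
      (by rw [hi0]) (by rw [hi0])
  refine MFeasible.of_replace P' hP' i0 (fun i hi => Function.update_of_ne hi _ _) w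
    fun i hi => ?_
  simpa [w, MWalk.edges] using ⟨he0P' i, hP' i0 i (Ne.symm hi)⟩
end

section
/- Let (G,H) be a feasible instance with s1t1 ∈ EH and s1 ≠ t1. Then there exists an edge e = s1s1' of G incident to s1 such that the instance (G_e, H_e) obtained by the local move along e is feasible. -/
/-!
Route the demand `s₁t₁` along its walk `P` from `s₁` to `t₁`, and look at the last time `P`
visits `s₁`: the edge `e = s₁s₁'` by which it leaves then is not used again, so the rest of
`P` routes the new demand `s₁'t₁` in `G - e`. The other demands keep their walks, which
avoid `e` because `e` lies on `P`.
-/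

namespace MWalk

variable {V E : Type} {G : E → V × V}

def support : {u v : V} → MWalk G u v → List V
  | _, _, nil v => [v]
  | u, _, cons _ _ p => u :: p.support

theorem start_mem_support {u v : V} (p : MWalk G u v) : u ∈ p.support := by
  cases p <;> simp [support]

theorem endpoints_mem_support_of_mem_edges {u v : V} {p : MWalk G u v} {e : E}
    (he : e ∈ p.edges) : (G e).1 ∈ p.support ∧ (G e).2 ∈ p.support := by
  induction p with
  | nil => simp [edges] at he
  | cons e' he' tail ih =>
    simp only [edges, List.mem_cons] at he
    rcases he with rfl | he
    · rcases he' with h | h <;> simp [support, h, start_mem_support]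
    · simp [support, ih he]

theorem exists_last_exit {u a b : V} (p : MWalk G a b) (hu : u ∈ p.support) (hub : u ≠ b) :
    ∃ (e : E) (u' : V) (_ : G e = (u, u') ∨ G e = (u', u)) (q : MWalk G u' b),
      e ∈ p.edges ∧ e ∉ q.edges ∧ q.edges ⊆ p.edges := by
  induction p with
  | nil => simp_all [support]
  | @cons a w b e he tail ih =>
    by_cases hu' : u ∈ tail.support
    · obtain ⟨e', u', he', q, hmem, hnot, hsub⟩ := ih hu' hub
      exact ⟨e', u', he', q, List.mem_cons_of_mem _ hmem, hnot,
        fun x hx => List.mem_cons_of_mem _ (hsub hx)⟩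
    · obtain rfl : u = a := by simpa [support, hu'] using hu
      refine ⟨e, w, he, tail, List.mem_cons_self, fun he_tail => hu' ?_,
        List.subset_cons_self _ _⟩
      have := endpoints_mem_support_of_mem_edges he_tail
      rcases he with h | h <;> simp_all

theorem exists_subtype_of_forall_mem_edges {S : E → Prop} {a b : V} (p : MWalk G a b)
    (hp : ∀ e ∈ p.edges, S e) :
    ∃ p' : MWalk (fun e : Subtype S => G e.1) a b, p'.edges.map Subtype.val = p.edges := by
  induction p with
  | nil v => exact ⟨nil v, rfl⟩
  | cons e he tail ih =>
    simp only [edges, List.mem_cons, forall_eq_or_imp] at hp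
    obtain ⟨tail', htail⟩ := ih hp.2
    exact ⟨cons ⟨e, hp.1⟩ he tail', by simp [edges, htail]⟩

end MWalk

theorem MFeasible.of_exists_walks {V E E' : Type} {G : E → V × V} {H : E' → V × V}
    (L : E' → Set E) (hL : Pairwise fun i j => Disjoint (L i) (L j))
    (hwalk : ∀ i, ∃ w : MWalk G (H i).1 (H i).2, ∀ e ∈ w.edges, e ∈ L i) :
    MFeasible G H := by
  choose P hP using hwalk
  exact ⟨P, fun i j hij e hi hj => Set.disjoint_left.mp (hL hij) (hP i e hi) (hP j e hj)⟩

theorem MFeasible.subtype_of_exists_walks {V E E' : Type} {G : E → V × V} {H : E' → V × V}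
    (S : E → Prop) (L : E' → Set E) (hL : Pairwise fun i j => Disjoint (L i) (L j))
    (hwalk : ∀ i, ∃ w : MWalk G (H i).1 (H i).2, ∀ e ∈ w.edges, e ∈ L i ∧ S e) :
    MFeasible (fun e : Subtype S => G e.1) H := by
  refine .of_exists_walks (fun i => Subtype.val ⁻¹' L i) (fun i j hij => (hL hij).preimage _)
    fun i => ?_
  obtain ⟨w, hw⟩ := hwalk i
  obtain ⟨w', hw'⟩ := w.exists_subtype_of_forall_mem_edges fun e he => (hw e he).2
  refine ⟨w', fun e he => ?_⟩
  have := List.mem_map_of_mem (f := Subtype.val) he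
  rw [hw'] at this
  exact (hw e this).1

theorem MFeasible.erase_of_subwalk {V E E' : Type} [DecidableEq E'] {G : E → V × V}
    {H : E' → V × V} (P : (i : E') → MWalk G (H i).1 (H i).2)
    (hP : ∀ i j, i ≠ j → List.Disjoint (P i).edges (P j).edges) {i0 : E'} {e0 : E}
    (he0 : e0 ∈ (P i0).edges) {v : V} (q : MWalk G v (H i0).2) (he0q : e0 ∉ q.edges)
    (hq : q.edges ⊆ (P i0).edges) :
    MFeasible (fun e : {e : E // e ≠ e0} => G e.1) (Function.update H i0 (v, (H i0).2)) := by
  refine .subtype_of_exists_walks _ (fun i => {e | e ∈ (P i).edges})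
    (fun i j hij => Set.disjoint_left.mpr (hP i j hij)) fun i => ?_
  by_cases hi : i = i0
  · subst hi
    rw [Function.update_self]
    exact ⟨q, fun e he => ⟨hq he, fun h => he0q (h ▸ he)⟩⟩
  · rw [Function.update_of_ne hi]
    exact ⟨P i, fun e he => ⟨he, fun h => hP i0 i (Ne.symm hi) he0 (h ▸ he)⟩⟩

/-- If `(G, H)` is a feasible instance with a demand edge
`s₁t₁` where `s₁ ≠ t₁`, then some local move applied to `s₁` is feasible:
there is an edge `e = s₁s₁'` of `G` such that the instance `(G_e, H_e)`
(delete `e` from `G`, replace the demand edge `s₁t₁` by `s₁'t₁`) is feasible. -/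
theorem statement13 {V E E' : Type} [DecidableEq E']
    (G : E → V × V) (H : E' → V × V)
    (s1 t1 : V) (i0 : E') (hi0 : H i0 = (s1, t1)) (hne : s1 ≠ t1)
    (hfeas : MFeasible G H) :
    ∃ (e0 : E) (s1' : V),
      (G e0 = (s1, s1') ∨ G e0 = (s1', s1)) ∧
      MFeasible (fun e : {e : E // e ≠ e0} => G e.1)
        (Function.update H i0 (s1', t1)) := by
  obtain ⟨P, hP⟩ := hfeas
  have hs1 : s1 ∈ (P i0).support := by
    simpa [hi0] using (P i0).start_mem_support
  obtain rfl : t1 = (H i0).2 := by rw [hi0]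
  obtain ⟨e0, s1', he0, q, he0P, he0q, hq⟩ := (P i0).exists_last_exit hs1 hne
  exact ⟨e0, s1', he0, MFeasible.erase_of_subwalk P hP he0P q he0q hq⟩
end

section
/- Let Γ be an undirected multigraph with distinguished nodes s and t, let v and v' be nodes with v ≠ s, v' ≠ s, and sv ∈ EΓ, and let Γ' be the graph obtained from Γ by removing the edge sv and adding the edges sv' and v'v. Then the maximum cardinality of a collection of pairwise edge-disjoint s–t paths in Γ' is at least the maximum cardinality of a collection of pairwise edge-disjoint s–t paths in Γ. -/
theorem statement14_aux {V E : Type}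
    (Γ : E → V × V) (s v v' : V)
    (e0 : E) (he0 : Γ e0 = (s, v) ∨ Γ e0 = (v, s))
    (Γ' : (E ⊕ Unit) → V × V)
    (hold : ∀ e : E, e ≠ e0 → Γ' (Sum.inl e) = Γ e)
    (hnew1 : Γ' (Sum.inl e0) = (s, v'))
    (hnew2 : ∀ u : Unit, Γ' (Sum.inr u) = (v', v)) :
    ∀ {a b : V} (p : MWalk Γ a b),
      ∃ q : MWalk Γ' a b,
        ∀ x ∈ q.edges, Sum.elim id (fun _ => e0) x ∈ p.edges := by
  intro a b p
  induction p with
  | nil w => exact ⟨.nil w, by simp [MWalk.edges]⟩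
  | cons e he tail ih =>
    obtain ⟨q, hq⟩ := ih
    rename_i u c w
    by_cases h : e = e0
    · have hd : (u = s ∧ c = v) ∨ (u = v ∧ c = s) := by
        rw [h] at he
        rcases he with h1 | h1 <;> rcases he0 with h2 | h2 <;>
          rw [h1] at h2 <;> obtain ⟨hx, hy⟩ := Prod.mk.injEq .. ▸ h2
        · exact Or.inl ⟨hx, hy⟩
        · exact Or.inr ⟨hx, hy⟩
        · exact Or.inr ⟨hy, hx⟩
        · exact Or.inl ⟨hy, hx⟩
      rcases hd with ⟨hu, hc⟩ | ⟨hu, hc⟩ <;> subst hu <;> subst hc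
      · refine ⟨.cons (Sum.inl e) (Or.inl (by rw [h]; exact hnew1))
          (.cons (Sum.inr ()) (Or.inl (hnew2 ())) q), ?_⟩
        intro x hx
        simp only [MWalk.edges, List.mem_cons] at hx ⊢
        rcases hx with rfl | rfl | hx
        · exact Or.inl rfl
        · exact Or.inl h.symm
        · exact Or.inr (hq x hx)
      · refine ⟨.cons (Sum.inr ()) (Or.inr (hnew2 ()))
          (.cons (Sum.inl e) (Or.inr (by rw [h]; exact hnew1)) q), ?_⟩
        intro x hx
        simp only [MWalk.edges, List.mem_cons] at hx ⊢
        rcases hx with rfl | rfl | hx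
        · exact Or.inl h.symm
        · exact Or.inl rfl
        · exact Or.inr (hq x hx)
    · refine ⟨.cons (Sum.inl e) (by rw [hold e h]; exact he) q, ?_⟩
      intro x hx
      simp only [MWalk.edges, List.mem_cons] at hx ⊢
      rcases hx with rfl | hx
      · exact Or.inl rfl
      · exact Or.inr (hq x hx)

/-- Let `Γ'` be obtained from `Γ` by removing an edge `sv`
(`v ≠ s`) and adding the edges `sv'` and `v'v` (`v' ≠ s`). Then the maximum
cardinality of a collection of pairwise edge-disjoint `s`–`t` paths in `Γ'` is
at least that in `Γ`: every such collection in `Γ` gives rise to one of the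
same size in `Γ'`. -/
theorem statement14 {V E : Type}
    (Γ : E → V × V) (s t v v' : V) (hv : v ≠ s) (hv' : v' ≠ s)
    (e0 : E) (he0 : Γ e0 = (s, v) ∨ Γ e0 = (v, s))
    (Γ' : (E ⊕ Unit) → V × V)
    (hold : ∀ e : E, e ≠ e0 → Γ' (Sum.inl e) = Γ e)
    (hnew1 : Γ' (Sum.inl e0) = (s, v'))
    (hnew2 : ∀ u : Unit, Γ' (Sum.inr u) = (v', v)) :
    ∀ (n : ℕ) (P : Fin n → MWalk Γ s t),
      (∀ i j, i ≠ j → List.Disjoint (P i).edges (P j).edges) →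
      ∃ P' : Fin n → MWalk Γ' s t,
        ∀ i j, i ≠ j → List.Disjoint (P' i).edges (P' j).edges := by
  intro n P hP
  choose P' hP' using fun i =>
    statement14_aux Γ s v v' e0 he0 Γ' hold hnew1 hnew2 (P i)
  refine ⟨P', fun i j hij x hxi hxj => ?_⟩
  exact hP i j hij (hP' i x hxi) (hP' j x hxj)
end

section
/- Let (G,H) be a feasible Eulerian instance with three pairs of terminals and terminal set T = {s1,s2,s3,t1,t2,t3}, with G connected, and let p, q ∈ T. Suppose there exists some subset U' ⊆ VG with d_G(U') = d_H(U') = 2, G[U'] connected, and U' ∩ T = {p,q}. Let U be an inclusion-wise maximal set among all sets W ⊆ VG with W ∩ T = {p,q} and d_G(W) = 2. Then the induced subgraph G[U] is connected. -/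
/-!
The demand edges join terminals, so `d_H(W)` only depends on `W ∩ T`; every `W` with
`W ∩ T = {p, q}` therefore has `d_H(W) = d_H(U') = 2`, and the Eulerian condition makes
`d_G(W)` even, hence at least `2` when `W ≠ VG` (as `G` is connected). Uncrossing `U` and `U'`
with the submodularity of `d_G` gives `d_G(U ∪ U') = 2`, so `U' ⊆ U` by maximality, and `p, q`
lie in one component `R` of `G[U]`. The rest `U \ R` contains no terminal, so `d_G(U \ R)` is
even; since `d_G(R) ≥ 1` and `d_G(R) + d_G(U \ R) ≤ d_G(U) = 2`, the set `U \ R` is empty.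
-/

open Relation
open scoped Classical

variable {V E : Type}

section Cut

lemma mcut_eq_sum [Fintype E] (K : E → V × V) (W : Set V) :
    mcut K W = ∑ e, if ((K e).1 ∈ W ∧ (K e).2 ∉ W) ∨ ((K e).2 ∈ W ∧ (K e).1 ∉ W)
      then 1 else 0 := by
  rw [mcut, Set.ncard_eq_toFinset_card', Set.toFinset_ofPred, Finset.card_filter]

lemma mdeg_eq_sum [Fintype E] (K : E → V × V) (v : V) :
    mdeg K v = ∑ e, ((if (K e).1 = v then 1 else 0) + if (K e).2 = v then 1 else 0) := by
  rw [mdeg, Set.ncard_eq_toFinset_card', Set.toFinset_ofPred, Finset.card_filter,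
    Fintype.sum_prod_type]
  simp only [Fintype.sum_bool, cond_true, cond_false]

@[simp]
lemma mcut_empty (K : E → V × V) : mcut K ∅ = 0 := by
  simp [mcut]

lemma mcut_congr_of_inter_eq {K : E → V × V} {T W₁ W₂ : Set V}
    (hK : ∀ e, (K e).1 ∈ T ∧ (K e).2 ∈ T) (h : W₁ ∩ T = W₂ ∩ T) : mcut K W₁ = mcut K W₂ := by
  have hmem : ∀ v ∈ T, v ∈ W₁ ↔ v ∈ W₂ := fun v hv => by
    simpa [hv] using Set.ext_iff.1 h v
  unfold mcut
  congr 1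
  ext e
  simp only [Set.mem_ofPred_eq, hmem _ (hK e).1, hmem _ (hK e).2]

lemma exists_notMem_of_mcut_ne_zero {K : E → V × V} {W : Set V} (h : mcut K W ≠ 0) :
    ∃ v, v ∉ W := by
  obtain ⟨e, he | he⟩ := Set.nonempty_of_ncard_ne_zero h
  exacts [⟨_, he.2⟩, ⟨_, he.2⟩]

lemma mcut_union_add_mcut_inter_le [Fintype E] (K : E → V × V) (A B : Set V) :
    mcut K (A ∪ B) + mcut K (A ∩ B) ≤ mcut K A + mcut K B := by
  simp only [mcut_eq_sum, ← Finset.sum_add_distrib]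
  refine Finset.sum_le_sum fun e _ => ?_
  by_cases (K e).1 ∈ A <;> by_cases (K e).1 ∈ B <;>
    by_cases (K e).2 ∈ A <;> by_cases (K e).2 ∈ B <;>
    simp_all

lemma mcut_add_mcut_le_mcut_union [Fintype E] {K : E → V × V} {A B : Set V}
    (hAB : Disjoint A B)
    (hK : ∀ e, ¬((K e).1 ∈ A ∧ (K e).2 ∈ B) ∧ ¬((K e).2 ∈ A ∧ (K e).1 ∈ B)) :
    mcut K A + mcut K B ≤ mcut K (A ∪ B) := by
  simp only [mcut_eq_sum, ← Finset.sum_add_distrib]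
  refine Finset.sum_le_sum fun e _ => ?_
  have h1 : (K e).1 ∈ A → (K e).1 ∉ B := fun h => Set.disjoint_left.1 hAB h
  have h2 : (K e).2 ∈ A → (K e).2 ∉ B := fun h => Set.disjoint_left.1 hAB h
  have hKe := hK e
  by_cases (K e).1 ∈ A <;> by_cases (K e).1 ∈ B <;>
    by_cases (K e).2 ∈ A <;> by_cases (K e).2 ∈ B <;>
    simp_all

lemma mcut_union_eq_two_of_two_le [Fintype E] {K : E → V × V} {A B : Set V}
    (hA : mcut K A = 2) (hB : mcut K B = 2) (hunion : 2 ≤ mcut K (A ∪ B))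
    (hinter : 2 ≤ mcut K (A ∩ B)) : mcut K (A ∪ B) = 2 := by
  have := mcut_union_add_mcut_inter_le K A B
  omega

end Cut

section Parity

/-- Counting edge-ends in `W` mod 2: an edge contributes `[x ∈ W] + [y ∈ W]`, which is
`1` exactly when it crosses `W`. The finset `t` replaces the possibly infinite `W`. -/
lemma natCast_mcut_eq_sum_mdeg [Fintype E] (K : E → V × V) (W : Set V) (t : Finset V)
    (ht : ∀ e, ((K e).1 ∈ t ↔ (K e).1 ∈ W) ∧ ((K e).2 ∈ t ↔ (K e).2 ∈ W)) :
    (mcut K W : ZMod 2) = ∑ v ∈ t, (mdeg K v : ZMod 2) := by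
  simp only [mdeg_eq_sum, mcut_eq_sum, Nat.cast_sum, Nat.cast_add, Nat.cast_ite, Nat.cast_one,
    Nat.cast_zero]
  rw [Finset.sum_comm]
  refine Finset.sum_congr rfl fun e _ => ?_
  rw [Finset.sum_add_distrib, Finset.sum_ite_eq, Finset.sum_ite_eq]
  simp only [(ht e).1, (ht e).2]
  by_cases (K e).1 ∈ W <;> by_cases (K e).2 ∈ W <;> simp_all [show (1 : ZMod 2) + 1 = 0 from rfl]

lemma even_mcut_add_mcut [Fintype E] {E' : Type} [Fintype E'] {G : E → V × V}
    {H : E' → V × V} (euler : MEulerian G H) (W : Set V) : Even (mcut G W + mcut H W) := by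
  let t : Finset V := (Finset.univ.image (fun e => (G e).1) ∪ Finset.univ.image (fun e => (G e).2)
    ∪ Finset.univ.image (fun e => (H e).1) ∪ Finset.univ.image (fun e => (H e).2)).filter (· ∈ W)
  rw [← ZMod.natCast_eq_zero_iff_even, Nat.cast_add,
    natCast_mcut_eq_sum_mdeg G W t (fun e => by simp [t]),
    natCast_mcut_eq_sum_mdeg H W t (fun e => by simp [t]), ← Finset.sum_add_distrib]
  exact Finset.sum_eq_zero fun v _ => by
    rw [← Nat.cast_add, ZMod.natCast_eq_zero_iff_even]
    exact euler v

end Parity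

section Connectivity

lemma MWalk.exists_crossing {K : E → V × V} {W : Set V} :
    ∀ {a b : V}, MWalk K a b → a ∈ W → b ∉ W →
      ∃ e, ((K e).1 ∈ W ∧ (K e).2 ∉ W) ∨ ((K e).2 ∈ W ∧ (K e).1 ∉ W)
  | _, _, .nil _, ha, hb => absurd ha hb
  | _, _, .cons (v := v) e he tail, ha, hb => by
    by_cases hv : v ∈ W
    · exact tail.exists_crossing hv hb
    · exact ⟨e, by rcases he with he | he <;> simp [he, ha, hv]⟩

lemma mcut_ne_zero_of_mem_of_notMem [Finite E] {K : E → V × V} (hK : MConnected K)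
    {W : Set V} {a b : V} (ha : a ∈ W) (hb : b ∉ W) : mcut K W ≠ 0 := by
  obtain ⟨w⟩ := hK a b
  obtain ⟨e, he⟩ := w.exists_crossing ha hb
  exact Set.ncard_ne_zero_of_mem (a := e) he

lemma two_le_mcut_of_even [Finite E] {K : E → V × V} (hK : MConnected K) {W : Set V}
    (heven : Even (mcut K W)) {a b : V} (ha : a ∈ W) (hb : b ∉ W) : 2 ≤ mcut K W := by
  have := mcut_ne_zero_of_mem_of_notMem hK ha hb
  obtain ⟨k, hk⟩ := heven
  omega

def MInducedAdj (K : E → V × V) (U : Set V) (u v : V) : Prop :=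
  u ∈ U ∧ v ∈ U ∧ ∃ e, K e = (u, v) ∨ K e = (v, u)

instance (K : E → V × V) (U : Set V) : Std.Symm (MInducedAdj K U) where
  symm _ _ h := ⟨h.2.1, h.1, h.2.2.imp fun _ => Or.symm⟩

lemma MInducedAdj.mono {K : E → V × V} {U U' : Set V} (h : U' ⊆ U) :
    MInducedAdj K U' ≤ MInducedAdj K U :=
  fun _ _ huv => ⟨h huv.1, h huv.2.1, huv.2.2⟩

lemma MWalk.reflTransGen {K : E → V × V} {U : Set V} :
    ∀ {u v : V} (w : MWalk K u v), (∀ e ∈ w.edges, (K e).1 ∈ U ∧ (K e).2 ∈ U) →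
      ReflTransGen (MInducedAdj K U) u v
  | _, _, .nil _, _ => .refl
  | _, _, .cons e he tail, hw => by
    have hU := hw e List.mem_cons_self
    refine .head ⟨?_, ?_, e, he⟩ (tail.reflTransGen fun f hf => hw f (List.mem_cons_of_mem e hf))
    all_goals rcases he with he | he <;> simp [he] at hU <;> simp [hU]

lemma mInducedConnected_iff {K : E → V × V} {U : Set V} :
    MInducedConnected K U ↔ ∀ u ∈ U, ∀ v ∈ U, ReflTransGen (MInducedAdj K U) u v := by
  refine ⟨fun h u hu v hv => ?_, fun h u hu v hv => ?_⟩
  · obtain ⟨w, hw⟩ := h u hu v hv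
    exact w.reflTransGen hw
  · have huv := h u hu v hv
    clear hu
    induction huv using ReflTransGen.head_induction_on with
    | refl => exact ⟨.nil v, by simp [MWalk.edges]⟩
    | head hadj _ ih =>
      obtain ⟨hu, hc, e, he⟩ := hadj
      obtain ⟨w, hw⟩ := ih
      refine ⟨.cons e he w, fun f hf => ?_⟩
      rcases List.mem_cons.1 hf with rfl | hf
      · rcases he with he | he <;> simp [he, hu, hc]
      · exact hw f hf

/-- The component of `a` in `K[U]`; empty if `a ∉ U`. -/
def mReach (K : E → V × V) (U : Set V) (a : V) : Set V :=
  {v | ReflTransGen (MInducedAdj K U) a v}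

lemma mReach_subset {K : E → V × V} {U : Set V} {a : V} (ha : a ∈ U) : mReach K U a ⊆ U :=
  fun _ h => by
    induction h with
    | refl => exact ha
    | tail _ hadj => exact hadj.2.1

lemma subset_mReach_of_mcut_le_two [Fintype E] {K : E → V × V} (hK : MConnected K)
    {U : Set V} (hU : mcut K U ≤ 2) {a b : V} (ha : a ∈ U) (hb : b ∉ U)
    (heven : Even (mcut K (U \ mReach K U a))) : U ⊆ mReach K U a := by
  set R := mReach K U a
  have hRU : R ⊆ U := mReach_subset ha
  have hclosed : ∀ e, ¬((K e).1 ∈ R ∧ (K e).2 ∈ U \ R) ∧ ¬((K e).2 ∈ R ∧ (K e).1 ∈ U \ R) :=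
    fun e => ⟨fun ⟨h1, h2, h2R⟩ => h2R (.tail h1 ⟨hRU h1, h2, e, .inl rfl⟩),
      fun ⟨h2, h1, h1R⟩ => h1R (.tail h2 ⟨hRU h2, h1, e, .inr rfl⟩)⟩
  have hsum : mcut K R + mcut K (U \ R) ≤ mcut K U := by
    simpa [Set.union_sdiff_cancel hRU] using
      mcut_add_mcut_le_mcut_union Set.disjoint_sdiff_right hclosed
  have hR : mcut K R ≠ 0 := mcut_ne_zero_of_mem_of_notMem hK .refl fun h => hb (hRU h)
  intro c hc
  by_contra hcR
  have := two_le_mcut_of_even hK heven ⟨hc, hcR⟩ fun h => h.2 .refl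
  omega

lemma mInducedConnected_of_subset_mReach {K : E → V × V} {U : Set V} {a : V}
    (h : U ⊆ mReach K U a) : MInducedConnected K U :=
  mInducedConnected_iff.2 fun _ hu _ hv => (Std.Symm.symm _ _ (h hu)).trans (h hv)

end Connectivity

theorem statement17_general {V E : Type} [Fintype E]
    (G : E → V × V) (s1 t1 s2 t2 s3 t3 : V)
    (H : Fin 3 → V × V) (hH : H = ![(s1, t1), (s2, t2), (s3, t3)])
    (T : Set V) (hT : T = {s1, s2, s3, t1, t2, t3})
    (euler : MEulerian G H)
    (hconn : MConnected G)
    (p q : V)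
    (U' : Set V) (hU'G : mcut G U' = 2) (hU'H : mcut H U' = 2)
    (hU'conn : MInducedConnected G U') (hU'T : U' ∩ T = {p, q})
    (U : Set V) (hUT : U ∩ T = {p, q}) (hUG : mcut G U = 2)
    (hUmax : ∀ W : Set V, W ∩ T = {p, q} → mcut G W = 2 → U ⊆ W → W = U) :
    MInducedConnected G U := by
  have hHT : ∀ i, (H i).1 ∈ T ∧ (H i).2 ∈ T := by
    subst hH hT
    intro i
    fin_cases i <;> simp
  have hpU : p ∈ U := (hUT.ge (Set.mem_insert p {q})).1
  have hpU' : p ∈ U' := (hU'T.ge (Set.mem_insert p {q})).1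
  have hqU' : q ∈ U' := (hU'T.ge (Set.mem_insert_of_mem p rfl)).1
  have hUnion : (U ∪ U') ∩ T = {p, q} := by
    rw [Set.union_inter_distrib_right, hUT, hU'T, Set.union_self]
  have hInter : (U ∩ U') ∩ T = {p, q} := by
    rw [Set.inter_inter_distrib_right, hUT, hU'T, Set.inter_self]
  have hcutH : ∀ W, W ∩ T = {p, q} → mcut H W = 2 := fun W hW => by
    rw [mcut_congr_of_inter_eq hHT (hW.trans hU'T.symm), hU'H]
  have hevenG : ∀ W, Even (mcut H W) → Even (mcut G W) :=
    fun W => (Nat.even_add.1 (even_mcut_add_mcut euler W)).2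
  have hevenT : ∀ W, W ∩ T = {p, q} → Even (mcut G W) :=
    fun W hW => hevenG W (hcutH W hW ▸ even_two)
  obtain ⟨v, hv⟩ := exists_notMem_of_mcut_ne_zero (K := H) (W := U ∪ U') <| by
    rw [hcutH _ hUnion]
    exact two_ne_zero
  have hU'U : U' ⊆ U := by
    have hUnionG := mcut_union_eq_two_of_two_le hUG hU'G
      (two_le_mcut_of_even hconn (hevenT _ hUnion) (Or.inl hpU) hv)
      (two_le_mcut_of_even hconn (hevenT _ hInter) ⟨hpU, hpU'⟩ fun h => hv (Or.inl h.1))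
    rw [← hUmax _ hUnion hUnionG Set.subset_union_left]
    exact Set.subset_union_right
  have hpq : q ∈ mReach G U p :=
    ReflTransGen.mono (MInducedAdj.mono hU'U) _ _ (mInducedConnected_iff.1 hU'conn p hpU' q hqU')
  have hrest : (U \ mReach G U p) ∩ T = ∅ ∩ T := by
    rw [← Set.inter_sdiff_right_comm, hUT, Set.empty_inter, Set.sdiff_eq_empty]
    exact Set.insert_subset .refl (Set.singleton_subset_iff.2 hpq)
  refine mInducedConnected_of_subset_mReach (subset_mReach_of_mcut_le_two hconn hUG.le hpU
    (fun h => hv (Or.inl h)) (hevenG _ ?_))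
  rw [mcut_congr_of_inter_eq hHT hrest, mcut_empty]
  exact even_two_mul 0

/-- Let `(G, H)` be a feasible Eulerian instance with three
pairs of terminals and terminal set `T`, with `G` connected, and let
`p, q ∈ T`. Suppose some `U' ⊆ VG` satisfies `d_G(U') = d_H(U') = 2`, `G[U']`
connected and `U' ∩ T = {p, q}`. If `U` is inclusion-wise maximal among all
sets `W ⊆ VG` with `W ∩ T = {p, q}` and `d_G(W) = 2`, then `G[U]` is
connected. -/
theorem statement17 {V E : Type} [Fintype E]
    (G : E → V × V) (s1 t1 s2 t2 s3 t3 : V)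
    (H : Fin 3 → V × V) (hH : H = ![(s1, t1), (s2, t2), (s3, t3)])
    (T : Set V) (hT : T = {s1, s2, s3, t1, t2, t3})
    (euler : MEulerian G H)
    (hfeas : MFeasible G H)
    (hconn : MConnected G)
    (p q : V) (hp : p ∈ T) (hq : q ∈ T)
    (U' : Set V) (hU'G : mcut G U' = 2) (hU'H : mcut H U' = 2)
    (hU'conn : MInducedConnected G U') (hU'T : U' ∩ T = {p, q})
    (U : Set V) (hUT : U ∩ T = {p, q}) (hUG : mcut G U = 2)
    (hUmax : ∀ W : Set V, W ∩ T = {p, q} → mcut G W = 2 → U ⊆ W → W = U) :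
    MInducedConnected G U :=
  statement17_general G s1 t1 s2 t2 s3 t3 H hH T hT euler hconn p q U' hU'G hU'H hU'conn hU'T U hUT
    hUG hUmax
end

section
/- Let (G,H) be a feasible Eulerian instance with three pairs of terminals, H = (VG, {s1t1, s2t2, s3t3}), and suppose U ⊆ VG satisfies d_G(U) = d_H(U) = 2, G[U] is connected, s1, s2 ∈ U, and t1, t2, s3, t3 ∈ VG − U, with δ_G(U) = {u1v1, u2v2} where u1, u2 ∈ U and v1, v2 ∈ VG − U. Then there exist two edge-disjoint paths Q1 and Q2 in G − EG[U] (the graph obtained by deleting all edges of G[U]), where either Q1 goes from u1 to t1 and Q2 from u2 to t2, or Q1 goes from u1 to t2 and Q2 from u2 to t1. -/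
/-!
Each of the two demand paths `s₁t₁`, `s₂t₂` leaves `U`, hence uses one of the only two
cut edges `e₁`, `e₂`; being edge-disjoint, they use different ones. The final segment of
each path, from its last exit out of `U` onwards, starts at `u₁` or `u₂` and never
re-enters `U`, so it contains no edge of `G[U]`.
-/

section Cut
variable {V E : Type} {G : E → V × V} {U : Set V}

theorem crosses_of_incident {c : E} {y z : V} (hyz : G c = (y, z) ∨ G c = (z, y))
    (hy : y ∈ U) (hz : z ∉ U) :
    ((G c).1 ∈ U ∧ (G c).2 ∉ U) ∨ ((G c).2 ∈ U ∧ (G c).1 ∉ U) := by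
  rcases hyz with h | h <;> simp [h, hy, hz]

theorem eq_of_incident_of_mem_of_not_mem {c : E} {u v y z : V}
    (huv : G c = (u, v) ∨ G c = (v, u)) (hyz : G c = (y, z) ∨ G c = (z, y))
    (hy : y ∈ U) (hv : v ∉ U) : y = u := by
  rcases huv with h | h <;> rcases hyz with h' | h' <;>
    simp only [h, Prod.mk.injEq] at h' <;> grind

namespace MWalk

theorem exists_lastExit_or_outside {x w : V} (p : MWalk G x w) (hw : w ∉ U) :
    (∃ c ∈ p.edges, ∃ y z, (G c = (y, z) ∨ G c = (z, y)) ∧ y ∈ U ∧ z ∉ U ∧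
      ∃ r : MWalk G z w, r.edges ⊆ p.edges ∧ ∀ e ∈ r.edges, (G e).1 ∉ U ∧ (G e).2 ∉ U) ∨
    x ∉ U ∧ ∀ e ∈ p.edges, (G e).1 ∉ U ∧ (G e).2 ∉ U := by
  induction p with
  | nil v => exact .inr ⟨hw, by simp [edges]⟩
  | @cons a b w e he tail ih =>
    rcases ih hw with ⟨c, hc, y, z, hyz, hy, hz, r, hr, hrout⟩ | ⟨hb, hout⟩
    · exact .inl ⟨c, .tail _ hc, y, z, hyz, hy, hz, r, fun _ h => .tail _ (hr h), hrout⟩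
    · by_cases ha : a ∈ U
      · exact .inl ⟨e, .head _, a, b, he, ha, hb, tail, List.subset_cons_self _ _, hout⟩
      · refine .inr ⟨ha, ?_⟩
        simp only [edges, List.mem_cons, forall_eq_or_imp]
        exact ⟨by rcases he with h | h <;> simp [h, ha, hb], hout⟩

theorem exists_exit_walk {x w : V} (p : MWalk G x w) (hx : x ∈ U) (hw : w ∉ U) :
    ∃ c ∈ p.edges, ∃ y z, (G c = (y, z) ∨ G c = (z, y)) ∧ y ∈ U ∧ z ∉ U ∧
      ∃ q : MWalk G y w, q.edges ⊆ p.edges ∧ ∀ e ∈ q.edges, ¬((G e).1 ∈ U ∧ (G e).2 ∈ U) := by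
  obtain ⟨c, hc, y, z, hyz, hy, hz, r, hr, hrout⟩ | ⟨hx', -⟩ := p.exists_lastExit_or_outside hw
  · refine ⟨c, hc, y, z, hyz, hy, hz, cons c hyz r, List.cons_subset.2 ⟨hc, hr⟩, ?_⟩
    simp only [edges, List.mem_cons, forall_eq_or_imp]
    exact ⟨by rcases hyz with h | h <;> simp [h, hz], fun e he h => (hrout e he).1 h.1⟩
  · exact absurd hx hx'

end MWalk
end Cut

theorem statement18_general {V E : Type}
    (G : E → V × V) (s1 t1 s2 t2 s3 t3 : V)
    (H : Fin 3 → V × V) (hH : H = ![(s1, t1), (s2, t2), (s3, t3)])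
    (hfeas : MFeasible G H)
    (U : Set V)
    (hs1 : s1 ∈ U) (hs2 : s2 ∈ U)
    (ht1 : t1 ∉ U) (ht2 : t2 ∉ U)
    (e1 e2 : E) (u1 v1 u2 v2 : V)
    (he1 : G e1 = (u1, v1) ∨ G e1 = (v1, u1)) (hv1 : v1 ∉ U)
    (he2 : G e2 = (u2, v2) ∨ G e2 = (v2, u2)) (hv2 : v2 ∉ U)
    (hdelta : ∀ e : E,
      (((G e).1 ∈ U ∧ (G e).2 ∉ U) ∨ ((G e).2 ∈ U ∧ (G e).1 ∉ U)) → e = e1 ∨ e = e2) :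
    (∃ (Q1 : MWalk G u1 t1) (Q2 : MWalk G u2 t2),
        (∀ e ∈ Q1.edges, ¬((G e).1 ∈ U ∧ (G e).2 ∈ U)) ∧
        (∀ e ∈ Q2.edges, ¬((G e).1 ∈ U ∧ (G e).2 ∈ U)) ∧
        Q1.edges.Disjoint Q2.edges) ∨
    (∃ (Q1 : MWalk G u1 t2) (Q2 : MWalk G u2 t1),
        (∀ e ∈ Q1.edges, ¬((G e).1 ∈ U ∧ (G e).2 ∈ U)) ∧
        (∀ e ∈ Q2.edges, ¬((G e).1 ∈ U ∧ (G e).2 ∈ U)) ∧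
        Q1.edges.Disjoint Q2.edges) := by
  subst hH
  obtain ⟨P, hP⟩ := hfeas
  have hdisj : (P 0).edges.Disjoint (P 1).edges := hP 0 1 (by decide)
  obtain ⟨c1, hc1, y1, z1, hyz1, hy1, hz1, Q1, hQ1, hQ1U⟩ :=
    (P 0 : MWalk G s1 t1).exists_exit_walk hs1 ht1
  obtain ⟨c2, hc2, y2, z2, hyz2, hy2, hz2, Q2, hQ2, hQ2U⟩ :=
    (P 1 : MWalk G s2 t2).exists_exit_walk hs2 ht2
  have hc12 : c1 ≠ c2 := fun h => hdisj hc1 (h ▸ hc2)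
  have hQ12 : Q1.edges.Disjoint Q2.edges := fun _ h1 h2 => hdisj (hQ1 h1) (hQ2 h2)
  rcases hdelta c1 (crosses_of_incident hyz1 hy1 hz1) with rfl | rfl <;>
    rcases hdelta c2 (crosses_of_incident hyz2 hy2 hz2) with rfl | rfl
  · exact absurd rfl hc12
  · obtain rfl := eq_of_incident_of_mem_of_not_mem he1 hyz1 hy1 hv1
    obtain rfl := eq_of_incident_of_mem_of_not_mem he2 hyz2 hy2 hv2
    exact .inl ⟨Q1, Q2, hQ1U, hQ2U, hQ12⟩
  · obtain rfl := eq_of_incident_of_mem_of_not_mem he1 hyz2 hy2 hv1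
    obtain rfl := eq_of_incident_of_mem_of_not_mem he2 hyz1 hy1 hv2
    exact .inr ⟨Q2, Q1, hQ2U, hQ1U, hQ12.symm⟩
  · exact absurd rfl hc12

/-- Let `(G, H)` be a feasible Eulerian instance with three
pairs of terminals and let `U ⊆ VG` satisfy `d_G(U) = d_H(U) = 2`, `G[U]`
connected, `s₁, s₂ ∈ U`, `t₁, t₂, s₃, t₃ ∈ VG − U`, and
`δ_G(U) = {u₁v₁, u₂v₂}` with `u₁, u₂ ∈ U`, `v₁, v₂ ∉ U`. Then there are two
edge-disjoint paths `Q₁`, `Q₂` in `G − EG[U]` (using no edge with both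
endpoints in `U`) such that either `Q₁ : u₁–t₁` and `Q₂ : u₂–t₂`, or
`Q₁ : u₁–t₂` and `Q₂ : u₂–t₁`. -/
theorem statement18 {V E : Type} [Fintype E]
    (G : E → V × V) (s1 t1 s2 t2 s3 t3 : V)
    (H : Fin 3 → V × V) (hH : H = ![(s1, t1), (s2, t2), (s3, t3)])
    (euler : MEulerian G H)
    (hfeas : MFeasible G H)
    (U : Set V) (hUG : mcut G U = 2) (hUH : mcut H U = 2)
    (hUconn : MInducedConnected G U)
    (hs1 : s1 ∈ U) (hs2 : s2 ∈ U)
    (ht1 : t1 ∉ U) (ht2 : t2 ∉ U) (hs3 : s3 ∉ U) (ht3 : t3 ∉ U)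
    (e1 e2 : E) (u1 v1 u2 v2 : V) (hne : e1 ≠ e2)
    (he1 : G e1 = (u1, v1) ∨ G e1 = (v1, u1)) (hu1 : u1 ∈ U) (hv1 : v1 ∉ U)
    (he2 : G e2 = (u2, v2) ∨ G e2 = (v2, u2)) (hu2 : u2 ∈ U) (hv2 : v2 ∉ U)
    (hdelta : ∀ e : E,
      (((G e).1 ∈ U ∧ (G e).2 ∉ U) ∨ ((G e).2 ∈ U ∧ (G e).1 ∉ U)) → e = e1 ∨ e = e2) :
    (∃ (Q1 : MWalk G u1 t1) (Q2 : MWalk G u2 t2),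
        (∀ e ∈ Q1.edges, ¬((G e).1 ∈ U ∧ (G e).2 ∈ U)) ∧
        (∀ e ∈ Q2.edges, ¬((G e).1 ∈ U ∧ (G e).2 ∈ U)) ∧
        Q1.edges.Disjoint Q2.edges) ∨
    (∃ (Q1 : MWalk G u1 t2) (Q2 : MWalk G u2 t1),
        (∀ e ∈ Q1.edges, ¬((G e).1 ∈ U ∧ (G e).2 ∈ U)) ∧
        (∀ e ∈ Q2.edges, ¬((G e).1 ∈ U ∧ (G e).2 ∈ U)) ∧
        Q1.edges.Disjoint Q2.edges) :=
  statement18_general G s1 t1 s2 t2 s3 t3 H hH hfeas U hs1 hs2 ht1 ht2 e1 e2 u1 v1 u2 v2 he1 hv1 he2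
    hv2 hdelta
end
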